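/- Let 𝒜 be an abelian category with enough projectives, 𝒞 a resolving subcategory, P an upper-bounded complex of projective objects and C an upper-bounded complex with terms in 𝒞. Then the localization functor induces an isomorphism Hom_{K^-(𝒞)}(P, C) ≅ Hom_{K^-(𝒞)/K^b_{ac}(𝒞)}(P, C), where K^b_{ac}(𝒞) is the subcategory of complexes homotopy equivalent to bounded acyclic complexes over 𝒞. -/

import Mathlib

open CategoryTheory CategoryTheory.Limits

universe v u v₂ u₂

variable {𝒜 : Type u} [Category.{v} 𝒜] [Abelian 𝒜]

/-- A cochain complex belongs to `K^b_{ac}(𝒞)` if it is homotopy equivalent to a bounded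
acyclic cochain complex with all terms in `𝒞`. -/
def KbAc (𝒞 : 𝒜 → Prop) (X : CochainComplex 𝒜 ℤ) : Prop :=
  ∃ D : CochainComplex 𝒜 ℤ,
    (∃ a b : ℤ, ∀ n : ℤ, (n < a ∨ b < n) → IsZero (D.X n)) ∧
    (∀ n : ℤ, D.ExactAt n) ∧
    (∀ n : ℤ, 𝒞 (D.X n)) ∧
    Nonempty (HomotopyEquiv X D)

/-- The homotopy category `K^-(𝒞)` of upper-bounded cochain complexes with terms in `𝒞`,
as a full subcategory of `K(𝒜)`. -/
abbrev KMinus (𝒞 : 𝒜 → Prop) :=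
  ObjectProperty.FullSubcategory (fun X : HomotopyCategory 𝒜 (ComplexShape.up ℤ) =>
    (∃ b : ℤ, ∀ n : ℤ, b < n → IsZero (X.as.X n)) ∧ (∀ n : ℤ, 𝒞 (X.as.X n)))

/-- The class of morphisms of `K^-(𝒞)` whose mapping cone lies in `K^b_{ac}(𝒞)`; the Verdier
quotient `K^-(𝒞)/K^b_{ac}(𝒞)` is the localization of `K^-(𝒞)` at this class. -/
def WQuot (𝒞 : 𝒜 → Prop) : MorphismProperty (KMinus 𝒞) := fun X Y φ =>
  ∃ f : X.obj.as ⟶ Y.obj.as,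
    (HomotopyCategory.quotient 𝒜 (ComplexShape.up ℤ)).map f = φ.hom ∧
    KbAc 𝒞 (CochainComplex.mappingCone f)

/-!
A bounded-above complex of projectives `P` is K-projective: every map from it to an acyclic
complex is null-homotopic. The cone of a morphism `s` in `WQuot 𝒞` is acyclic, so the long exact
`Hom(P, -)`-sequence of its triangle shows that `s ∘ -` is bijective on `Hom(P, -)`, i.e. `P` is
colocal for `WQuot 𝒞`. Then `Hom(P, -)` inverts `WQuot 𝒞` and factors through the localization,
and a Yoneda argument shows that `L` is bijective on `Hom(P, -)`.
-/

universe v₁ u₁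

namespace CategoryTheory

variable {C : Type u₁} [Category.{v₁} C] {D : Type u₂} [Category.{v₂} D]

lemma Functor.FullyFaithful.isColocal_inverseImage {F : C ⥤ D} (hF : F.FullyFaithful)
    {W : MorphismProperty D} {X : C} (hX : W.isColocal (F.obj X)) :
    (W.inverseImage F).isColocal X := fun Y Z g hg => by
  have hcomp : (fun f : X ⟶ Y => f ≫ g) =
      hF.homEquiv.symm ∘ (fun f : F.obj X ⟶ F.obj Y => f ≫ F.map g) ∘ hF.homEquiv := by
    ext f
    simp
  rw [hcomp]
  exact hF.homEquiv.symm.bijective.comp ((hX (F.map g) hg).comp hF.homEquiv.bijective)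

namespace MorphismProperty

variable {W : MorphismProperty C} {X : C}

lemma isColocal.isInvertedBy_coyoneda (hX : W.isColocal X) :
    W.IsInvertedBy (coyoneda.obj (Opposite.op X) ⋙ uliftFunctor.{v₂}) := fun _ _ g hg => by
  rw [isIso_iff_bijective]
  exact (Equiv.ulift.symm.bijective.comp (hX g hg)).comp Equiv.ulift.bijective

lemma isColocal.map_bijective (hX : W.isColocal X) (L : C ⥤ D) [L.IsLocalization W] (Y : C) :
    Function.Bijective (L.map : (X ⟶ Y) → (L.obj X ⟶ L.obj Y)) := by
  let F : C ⥤ Type (max v₁ v₂) := coyoneda.obj (Opposite.op X) ⋙ uliftFunctor.{v₂}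
  let G : D ⥤ Type (max v₁ v₂) := Localization.lift F hX.isInvertedBy_coyoneda L
  let e : L ⋙ G ≅ F := Localization.fac F hX.isInvertedBy_coyoneda L
  let H : D ⥤ Type (max v₁ v₂) := coyoneda.obj (Opposite.op (L.obj X)) ⋙ uliftFunctor.{v₁}
  let τ : F ⟶ L ⋙ H :=
    { app := fun Y => TypeCat.ofHom fun f => ⟨L.map f.down⟩
      naturality := fun _ _ g => by ext f; exact congrArg ULift.up (L.map_comp f.down g) }
  -- `τ` descends to `D` because whiskering with a localization functor is fully faithful
  let τ' : G ⟶ H := (Localization.whiskeringLeftFunctor' L W _).preimage (e.hom ≫ τ)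
  have hτ' (Y : C) (x : G.obj (L.obj Y)) : τ'.app (L.obj Y) x = τ.app Y (e.hom.app Y x) :=
    types_congr_hom (NatTrans.congr_app
      ((Localization.whiskeringLeftFunctor' L W _).map_preimage (e.hom ≫ τ)) Y) x
  let u : G.obj (L.obj X) := e.inv.app X ⟨𝟙 X⟩
  have hu : e.hom.app X u = ⟨𝟙 X⟩ := types_congr_hom (e.inv_hom_id_app X) _
  let r (φ : L.obj X ⟶ L.obj Y) : X ⟶ Y := (e.hom.app Y (G.map φ u)).down
  refine Function.bijective_iff_has_inverse.2 ⟨r, fun f => ?_, fun φ => ?_⟩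
  · change (e.hom.app Y ((L ⋙ G).map f u)).down = f
    rw [NatTrans.naturality_apply e.hom f u, hu]
    exact Category.id_comp f
  · have hτ'u := hτ' X u
    rw [hu] at hτ'u
    have key : τ.app Y (e.hom.app Y (G.map φ u)) = H.map φ (τ.app X ⟨𝟙 X⟩) := by
      rw [← hτ', NatTrans.naturality_apply τ' φ u, hτ'u]
    have hφ := congrArg ULift.down key
    change L.map (r φ) = L.map (𝟙 X) ≫ φ at hφ
    rwa [L.map_id, Category.id_comp] at hφ

end MorphismProperty

end CategoryTheory

section

variable {𝒞 : 𝒜 → Prop}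

open HomotopyCategory

lemma KbAc.quotient_obj_mem_subcategoryAcyclic {X : CochainComplex 𝒜 ℤ} (hX : KbAc 𝒞 X) :
    subcategoryAcyclic 𝒜 ((quotient 𝒜 (ComplexShape.up ℤ)).obj X) := by
  obtain ⟨D, -, hD, -, ⟨e⟩⟩ := hX
  exact (subcategoryAcyclic 𝒜).prop_of_iso (isoOfHomotopyEquiv e).symm
    ((quotient_obj_mem_subcategoryAcyclic_iff_exactAt D).2 hD)

lemma wQuot_le_inverseImage_trW :
    WQuot 𝒞 ≤ (subcategoryAcyclic 𝒜).trW.inverseImage (ObjectProperty.ι _) := by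
  rintro X Y φ ⟨f, hfφ, hf⟩
  change (subcategoryAcyclic 𝒜).trW φ.hom
  rw [← hfφ]
  exact ((subcategoryAcyclic 𝒜).trW_iff_of_distinguished _
    (mappingCone_triangleh_distinguished f)).2 hf.quotient_obj_mem_subcategoryAcyclic

lemma isColocal_wQuot_of_projective (P : KMinus 𝒞) (hP : ∀ n : ℤ, Projective (P.obj.as.X n)) :
    (WQuot 𝒞).isColocal P := by
  obtain ⟨b, hb⟩ := P.property.1
  have : CochainComplex.IsStrictlyLE P.obj.as b := (CochainComplex.isStrictlyLE_iff _ b).2 hb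
  have : CochainComplex.IsKProjective P.obj.as := CochainComplex.isKProjective_of_projective _ b
  have hP' := CochainComplex.IsKProjective.leftOrthogonal P.obj.as
  rw [← ObjectProperty.isColocal_trW] at hP'
  exact MorphismProperty.isColocal_antitone wQuot_le_inverseImage_trW _
    ((ObjectProperty.fullyFaithfulι _).isColocal_inverseImage hP')

end

theorem stmt_18_general (𝒞 : 𝒜 → Prop)
    (D : Type u₂) [Category.{v₂} D] (L : KMinus 𝒞 ⥤ D) [L.IsLocalization (WQuot 𝒞)]
    (P C : KMinus 𝒞) (hP : ∀ n : ℤ, Projective (P.obj.as.X n)) :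
    Function.Bijective (fun f : P ⟶ C => L.map f) :=
  (isColocal_wQuot_of_projective P hP).map_bijective L C

/-- Let `𝒜` be an abelian category with enough projectives, `𝒞` a resolving
subcategory, `P` an upper-bounded complex of projectives and `C` an upper-bounded complex
with terms in `𝒞`, both regarded as objects of `K^-(𝒞)`.  Then the localization functor
(realizing the Verdier quotient `K^-(𝒞)/K^b_{ac}(𝒞)`) induces a bijection
`Hom_{K^-(𝒞)}(P, C) ≅ Hom_{K^-(𝒞)/K^b_{ac}(𝒞)}(P, C)`, `f ↦ f/Id_P`. -/
theorem stmt_18 [EnoughProjectives 𝒜] (𝒞 : 𝒜 → Prop)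
    (h𝒞iso : ∀ X Y : 𝒜, (X ≅ Y) → 𝒞 X → 𝒞 Y)
    (h𝒞proj : ∀ X : 𝒜, Projective X → 𝒞 X)
    (h𝒞ext : ∀ S : ShortComplex 𝒜, S.ShortExact → 𝒞 S.X₁ → 𝒞 S.X₃ → 𝒞 S.X₂)
    (h𝒞summand : ∀ X Y : 𝒜, 𝒞 (X ⊞ Y) → 𝒞 X)
    (h𝒞ker : ∀ S : ShortComplex 𝒜, S.ShortExact → 𝒞 S.X₂ → 𝒞 S.X₃ → 𝒞 S.X₁)
    (D : Type u₂) [Category.{v₂} D] (L : KMinus 𝒞 ⥤ D) [L.IsLocalization (WQuot 𝒞)]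
    (P C : KMinus 𝒞) (hP : ∀ n : ℤ, Projective (P.obj.as.X n)) :
    Function.Bijective (fun f : P ⟶ C => L.map f) :=
  stmt_18_general 𝒞 D L P C hP
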